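/- There exist finite sets A and X, a relation I ⊆ A × X, subsets Y₁, Y₂ ⊆ X, and a subset B ⊆ A such that B is Galois-stable with respect to Y₁ and Galois-stable with respect to Y₂, but B is not Galois-stable with respect to Y₁ ∩ Y₂. (Hence the family of feature sets with respect to which B is Galois-stable, although upward closed, need not be a filter. A witnessing example: A = {a,b}, X = {x₁,x₂,x₃}, I = {(a,x₁),(a,x₂),(a,x₃),(b,x₂)}, Y₁ = {x₁,x₂}, Y₂ = {x₂,x₃}, B = {a}.) -/

import Mathlib

/-- `Y`-restricted upward derivation operator of a formal context `(A, X, I)`: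
`B↑_Y = {x ∈ Y | ∀ a ∈ B, (a,x) ∈ I}`. -/
def fcaUp {A X : Type*} (I : Set (A × X)) (Y : Set X) (B : Set A) : Set X :=
  {x ∈ Y | ∀ a ∈ B, (a, x) ∈ I}

/-- Downward derivation operator: `Z↓ = {a ∈ A | ∀ x ∈ Z, (a,x) ∈ I}`. -/
def fcaDown {A X : Type*} (I : Set (A × X)) (Z : Set X) : Set A :=
  {a | ∀ x ∈ Z, (a, x) ∈ I}

/-- `B ⊆ A` is Galois-stable with respect to `Y ⊆ X` if `(B↑_Y)↓ = B`. -/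
def GaloisStable {A X : Type*} (I : Set (A × X)) (Y : Set X) (B : Set A) : Prop :=
  fcaDown I (fcaUp I Y B) = B

/-!
In the witnessing context the object `a` has every feature, so `{a}` is Galois-stable with
respect to `Y` exactly when every other object lacks some feature of `Y`. The object `b` lacks
`x₁ ∈ Y₁` and `x₃ ∈ Y₂`, but it has `x₂`, the only feature common to `Y₁` and `Y₂`.
-/

section FormalContext

variable {A X : Type*} (I : Set (A × X)) (Y : Set X)

theorem subset_fcaDown_fcaUp (B : Set A) : B ⊆ fcaDown I (fcaUp I Y B) :=
  fun _ ha _ hx => hx.2 _ ha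

theorem galoisStable_iff_fcaDown_fcaUp_subset (B : Set A) :
    GaloisStable I Y B ↔ fcaDown I (fcaUp I Y B) ⊆ B :=
  ⟨Eq.subset, fun h => h.antisymm (subset_fcaDown_fcaUp I Y B)⟩

theorem galoisStable_singleton_iff (a : A) :
    GaloisStable I Y {a} ↔ ∀ a' ≠ a, ∃ x ∈ Y, (a, x) ∈ I ∧ (a', x) ∉ I := by
  simp only [galoisStable_iff_fcaDown_fcaUp_subset, Set.subset_singleton_iff, fcaDown, fcaUp,
    Set.mem_singleton_iff, forall_eq, Set.mem_ofPred_eq]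
  refine forall_congr' fun a' => ?_
  constructor
  · intro h hne
    by_contra! hall
    exact hne (h fun x ⟨hY, ha⟩ => hall x hY ha)
  · rintro h hall
    by_contra hne
    obtain ⟨x, hY, ha, ha'⟩ := h hne
    exact ha' (hall x ⟨hY, ha⟩)

end FormalContext

/-- there is a finite formal context, feature sets `Y₁, Y₂`, and a set of
objects `B` which is Galois-stable w.r.t. `Y₁` and w.r.t. `Y₂`, but not w.r.t. `Y₁ ∩ Y₂`.
Hence the (upward closed) family of feature sets w.r.t. which `B` is Galois-stable
need not be a filter. -/
theorem galoisStable_not_filter : ∃ (A X : Type), Finite A ∧ Finite X ∧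
    ∃ (I : Set (A × X)) (Y₁ Y₂ : Set X) (B : Set A),
      GaloisStable I Y₁ B ∧ GaloisStable I Y₂ B ∧ ¬ GaloisStable I (Y₁ ∩ Y₂) B := by
  -- objects `a, b` are `0, 1`; features `x₁, x₂, x₃` are `0, 1, 2`
  refine ⟨Fin 2, Fin 3, inferInstance, inferInstance,
    {p | p.1 = 0 ∨ p.2 = 1}, {0, 1}, {1, 2}, {0}, ?_, ?_, ?_⟩ <;>
  simp only [galoisStable_singleton_iff] <;> decide
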